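/- arXiv:2006.03992 — 5 statements merged into one kernel-verified Lean document; each statement's English description precedes it below -/
import Mathlib

section
/- Let Θ be a finite set, let p be a probability distribution on Θ × D₁ × ⋯ × Dₙ such that D₁,…,Dₙ are conditionally independent given θ, and assume p(θ) > 0 for all θ. Then for any datasets (D₁,…,Dₙ) and (D₁',…,Dₙ') with positive probability, if p(θ|Dᵢ) = p(θ|Dᵢ') for all i and all θ, then p(θ|D₁,…,Dₙ) = p(θ|D₁',…,Dₙ') for all θ. -/
/-!
By conditional independence the joint weight is `p(θ, D) = p(θ) ∏ᵢ p(θ, Dᵢ) / p(θ)`. Equal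
individual posteriors say that `p(θ, Dᵢ) = cᵢ p(θ, Dᵢ')` with `cᵢ = p(Dᵢ) / p(Dᵢ')` independent
of `θ`, hence `p(θ, D) = (∏ᵢ cᵢ) p(θ, D')`, and a common factor disappears under normalization.
-/

open Finset

section Field

variable {Θ ι K : Type*} [Fintype Θ] [Fintype ι] [Field K]

lemma div_sum_eq_div_sum_of_eq_const_mul {f g : Θ → K} {c : K} (hc : c ≠ 0)
    (h : ∀ θ, f θ = c * g θ) (θ : Θ) :
    f θ / ∑ θ', f θ' = g θ / ∑ θ', g θ' := by
  rw [h θ, Fintype.sum_congr _ _ h, ← mul_sum, mul_div_mul_left _ _ hc]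

lemma eq_div_mul_of_div_eq_div {a b s t : K} (hs : s ≠ 0) (ht : t ≠ 0) (h : a / s = b / t) :
    a = s / t * b := by
  field_simp at h ⊢
  linear_combination h

lemma eq_prod_mul_of_div_eq_prod_div {π x y : K} {u v c : ι → K} (hπ : π ≠ 0)
    (hx : x / π = ∏ i, u i / π) (hy : y / π = ∏ i, v i / π) (huv : ∀ i, u i = c i * v i) :
    x = (∏ i, c i) * y :=
  calc x = π * (x / π) := (mul_div_cancel₀ x hπ).symm
    _ = π * ∏ i, c i * (v i / π) := by simp only [hx, huv, mul_div_assoc]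
    _ = (∏ i, c i) * (π * (y / π)) := by rw [prod_mul_distrib, hy]; ring
    _ = (∏ i, c i) * y := by rw [mul_div_cancel₀ y hπ]

/-- Bayes' rule with weights in a field: `x, y` are joint weights of two data tuples, `u i, v i`
the joint weights of their `i`-th components and `π` the prior. -/
theorem posterior_eq_of_marginal_posteriors_eq {π x y : Θ → K} {u v : ι → Θ → K}
    (hπ : ∀ θ, π θ ≠ 0)
    (hx : ∀ θ, x θ / π θ = ∏ i, u i θ / π θ) (hy : ∀ θ, y θ / π θ = ∏ i, v i θ / π θ)
    (hu : ∀ i, ∑ θ, u i θ ≠ 0) (hv : ∀ i, ∑ θ, v i θ ≠ 0)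
    (hpost : ∀ i θ, u i θ / ∑ θ', u i θ' = v i θ / ∑ θ', v i θ') (θ : Θ) :
    x θ / ∑ θ', x θ' = y θ / ∑ θ', y θ' := by
  have hscale : ∀ i θ, u i θ = (∑ θ', u i θ') / (∑ θ', v i θ') * v i θ := fun i θ ↦
    eq_div_mul_of_div_eq_div (hu i) (hv i) (hpost i θ)
  refine div_sum_eq_div_sum_of_eq_const_mul ?_
    (fun θ ↦ eq_prod_mul_of_div_eq_prod_div (hπ θ) (hx θ) (hy θ) (hscale · θ)) θ
  exact prod_ne_zero_iff.mpr fun i _ ↦ div_ne_zero (hu i) (hv i)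

end Field

theorem stmt0_general
    {Θ : Type*} [Fintype Θ] {n : ℕ} {D : Fin n → Type*} [∀ i, Fintype (D i)]
    [∀ i, DecidableEq (D i)]
    (p : Θ → (∀ i, D i) → ℝ)
    -- positive prior
    (hprior : ∀ θ : Θ, 0 < ∑ d : ∀ i, D i, p θ d)
    -- conditional independence: p(D₁,…,Dₙ | θ) = ∏ᵢ p(Dᵢ | θ)
    (hci : ∀ θ d, p θ d / (∑ d' : ∀ i, D i, p θ d')
        = ∏ i : Fin n,
            (∑ d' : ∀ i, D i, if d' i = d i then p θ d' else 0)
              / (∑ d' : ∀ i, D i, p θ d'))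
    (d d' : ∀ i, D i)
    -- each individual dataset has positive probability
    (hdi : ∀ i, 0 < ∑ θ : Θ, ∑ d'' : ∀ i, D i, if d'' i = d i then p θ d'' else 0)
    (hdi' : ∀ i, 0 < ∑ θ : Θ, ∑ d'' : ∀ i, D i, if d'' i = d' i then p θ d'' else 0)
    -- equal individual posteriors: p(θ | Dᵢ) = p(θ | Dᵢ') for all i, θ
    (hpost : ∀ (i : Fin n) (θ : Θ),
        (∑ d'' : ∀ i, D i, if d'' i = d i then p θ d'' else 0)
            / (∑ θ' : Θ, ∑ d'' : ∀ i, D i, if d'' i = d i then p θ' d'' else 0)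
        = (∑ d'' : ∀ i, D i, if d'' i = d' i then p θ d'' else 0)
            / (∑ θ' : Θ, ∑ d'' : ∀ i, D i, if d'' i = d' i then p θ' d'' else 0)) :
    ∀ θ : Θ, p θ d / (∑ θ' : Θ, p θ' d) = p θ d' / (∑ θ' : Θ, p θ' d') :=
  posterior_eq_of_marginal_posteriors_eq (fun θ ↦ (hprior θ).ne') (hci · d) (hci · d')
    (fun i ↦ (hdi i).ne') (fun i ↦ (hdi' i).ne') hpost

/-- If datasets are conditionally independent given θ (finite Θ, finite
dataset spaces, positive prior), and two tuples of datasets (with positive probability)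
induce the same individual posteriors, then they induce the same joint posterior. -/
theorem stmt0
    {Θ : Type*} [Fintype Θ] {n : ℕ} {D : Fin n → Type*} [∀ i, Fintype (D i)]
    [∀ i, DecidableEq (D i)]
    (p : Θ → (∀ i, D i) → ℝ)
    (hp_nonneg : ∀ θ d, 0 ≤ p θ d)
    (hp_sum : ∑ θ : Θ, ∑ d : ∀ i, D i, p θ d = 1)
    -- positive prior
    (hprior : ∀ θ : Θ, 0 < ∑ d : ∀ i, D i, p θ d)
    -- conditional independence: p(D₁,…,Dₙ | θ) = ∏ᵢ p(Dᵢ | θ)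
    (hci : ∀ θ d, p θ d / (∑ d' : ∀ i, D i, p θ d')
        = ∏ i : Fin n,
            (∑ d' : ∀ i, D i, if d' i = d i then p θ d' else 0)
              / (∑ d' : ∀ i, D i, p θ d'))
    (d d' : ∀ i, D i)
    (hd : 0 < ∑ θ : Θ, p θ d) (hd' : 0 < ∑ θ : Θ, p θ d')
    -- each individual dataset has positive probability
    (hdi : ∀ i, 0 < ∑ θ : Θ, ∑ d'' : ∀ i, D i, if d'' i = d i then p θ d'' else 0)
    (hdi' : ∀ i, 0 < ∑ θ : Θ, ∑ d'' : ∀ i, D i, if d'' i = d' i then p θ d'' else 0)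
    -- equal individual posteriors: p(θ | Dᵢ) = p(θ | Dᵢ') for all i, θ
    (hpost : ∀ (i : Fin n) (θ : Θ),
        (∑ d'' : ∀ i, D i, if d'' i = d i then p θ d'' else 0)
            / (∑ θ' : Θ, ∑ d'' : ∀ i, D i, if d'' i = d i then p θ' d'' else 0)
        = (∑ d'' : ∀ i, D i, if d'' i = d' i then p θ d'' else 0)
            / (∑ θ' : Θ, ∑ d'' : ∀ i, D i, if d'' i = d' i then p θ' d'' else 0)) :
    ∀ θ : Θ, p θ d / (∑ θ' : Θ, p θ' d) = p θ d' / (∑ θ' : Θ, p θ' d') :=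
  stmt0_general p hprior hci d d' hdi hdi' hpost
end

section
/- Truthfulness of the log-PMI payment: let Θ be finite with prior p(θ) > 0, and let datasets Dᵢ and D₋ᵢ be conditionally independent given θ. For a fixed realization Dᵢ with p(Dᵢ) > 0, define for any reported posterior vector q ∈ Δ(Θ) (a probability distribution on Θ) the expected score S(q) = Σ_{D₋ᵢ} p(D₋ᵢ|Dᵢ) · log(Σ_θ q(θ)·p(θ|D₋ᵢ)/p(θ)), with the convention 0·log 0 = 0. Then S(q) ≤ S(p(·|Dᵢ)), i.e., truthfully reporting the posterior p(θ|Dᵢ) maximizes the expected log-PMI score. -/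
/-- truthfulness of the log-PMI payment. With finite Θ (positive prior π),
finite space Ω of other-providers' datasets, true posterior `postI = p(·|Dᵢ)`,
posteriors `postO ω = p(·|D₋ᵢ = ω)`, marginal `pmarg ω = p(D₋ᵢ = ω)` and conditional
`pgiven ω = p(D₋ᵢ = ω | Dᵢ)` consistent via conditional independence, the expected
log-PMI score S(q) = Σ_ω p(ω|Dᵢ)·log(Σ_θ q(θ)p(θ|ω)/π(θ)) is maximized at q = postI. -/
theorem stmt5
    {Θ Ω : Type*} [Fintype Θ] [Fintype Ω]
    (π : Θ → ℝ) (hπ_pos : ∀ θ, 0 < π θ) (hπ_sum : ∑ θ : Θ, π θ = 1)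
    (postI : Θ → ℝ) (hpostI_nonneg : ∀ θ, 0 ≤ postI θ)
    (hpostI_sum : ∑ θ : Θ, postI θ = 1)
    (postO : Ω → Θ → ℝ) (hpostO_nonneg : ∀ ω θ, 0 ≤ postO ω θ)
    (hpostO_sum : ∀ ω, ∑ θ : Θ, postO ω θ = 1)
    (pmarg : Ω → ℝ) (hpmarg_pos : ∀ ω, 0 < pmarg ω)
    (hpmarg_sum : ∑ ω : Ω, pmarg ω = 1)
    (pgiven : Ω → ℝ) (hpgiven_nonneg : ∀ ω, 0 ≤ pgiven ω)
    (hpgiven_sum : ∑ ω : Ω, pgiven ω = 1)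
    -- law of total probability: Σ_ω p(ω)·p(θ|ω) = π(θ)
    (htot : ∀ θ, ∑ ω : Ω, pmarg ω * postO ω θ = π θ)
    -- conditional independence (Lemma 12): PMI of the true posterior equals
    -- p(D₋ᵢ|Dᵢ)/p(D₋ᵢ)
    (hcons : ∀ ω, ∑ θ : Θ, postI θ * postO ω θ / π θ = pgiven ω / pmarg ω)
    -- the reported posterior
    (q : Θ → ℝ) (hq_nonneg : ∀ θ, 0 ≤ q θ) (hq_sum : ∑ θ : Θ, q θ = 1)
    -- well-definedness of the log score of the report
    (hq_pos : ∀ ω, 0 < pgiven ω → 0 < ∑ θ : Θ, q θ * postO ω θ / π θ) :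
    ∑ ω : Ω, pgiven ω * Real.log (∑ θ : Θ, q θ * postO ω θ / π θ)
      ≤ ∑ ω : Ω, pgiven ω * Real.log (∑ θ : Θ, postI θ * postO ω θ / π θ) := by
  set sq : Ω → ℝ := fun ω => ∑ θ : Θ, q θ * postO ω θ / π θ with hsq
  have hsq_nonneg : ∀ ω, 0 ≤ sq ω := fun ω =>
    Finset.sum_nonneg fun θ _ => div_nonneg (mul_nonneg (hq_nonneg θ) (hpostO_nonneg ω θ)) (hπ_pos θ).le
  -- total mass of pmarg * sq is 1
  have htotal : ∑ ω : Ω, pmarg ω * sq ω = 1 := by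
    have : ∑ ω : Ω, pmarg ω * sq ω = ∑ θ : Θ, (q θ / π θ) * ∑ ω : Ω, pmarg ω * postO ω θ := by
      simp only [hsq, Finset.mul_sum]
      rw [Finset.sum_comm]
      apply Finset.sum_congr rfl
      intro θ _
      apply Finset.sum_congr rfl
      intro ω _
      field_simp
    rw [this, ← hq_sum]
    apply Finset.sum_congr rfl
    intro θ _
    rw [htot θ, div_mul_cancel₀ _ (hπ_pos θ).ne']
  have key : ∀ ω : Ω, pgiven ω * Real.log (sq ω)
      ≤ pgiven ω * Real.log (∑ θ : Θ, postI θ * postO ω θ / π θ) + (pmarg ω * sq ω - pgiven ω) := by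
    intro ω
    rw [hcons ω]
    rcases eq_or_lt_of_le (hpgiven_nonneg ω) with h0 | hpos
    · rw [← h0]
      simp
      exact mul_nonneg (hpmarg_pos ω).le (hsq_nonneg ω)
    · have hsqpos := hq_pos ω hpos
      have hpm := hpmarg_pos ω
      have hx : 0 < pmarg ω * sq ω / pgiven ω := by positivity
      have hlog := Real.log_le_sub_one_of_pos hx
      have hlogx : Real.log (pmarg ω * sq ω / pgiven ω)
          = Real.log (sq ω) - Real.log (pgiven ω / pmarg ω) := by
        rw [Real.log_div (by positivity) hpos.ne', Real.log_mul hpm.ne' hsqpos.ne',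
          Real.log_div hpos.ne' hpm.ne']
        ring
      rw [hlogx] at hlog
      have := mul_le_mul_of_nonneg_left hlog hpos.le
      have h2 : pgiven ω * (pmarg ω * sq ω / pgiven ω - 1) = pmarg ω * sq ω - pgiven ω := by
        field_simp
      rw [h2] at this
      linarith
  calc ∑ ω : Ω, pgiven ω * Real.log (sq ω)
      ≤ ∑ ω : Ω, (pgiven ω * Real.log (∑ θ : Θ, postI θ * postO ω θ / π θ)
          + (pmarg ω * sq ω - pgiven ω)) := Finset.sum_le_sum fun ω _ => key ω
    _ = ∑ ω : Ω, pgiven ω * Real.log (∑ θ : Θ, postI θ * postO ω θ / π θ) := by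
        rw [Finset.sum_add_distrib, Finset.sum_sub_distrib, htotal, hpgiven_sum]
        ring
end

section
/- Kruskal rank of the Khatri–Rao (columnwise Kronecker) product: for matrices A ∈ ℝ^{I×F} and B ∈ ℝ^{J×F} with columns a₁,…,a_F and b₁,…,b_F, define A ⊙ B ∈ ℝ^{IJ×F} whose f-th column is the Kronecker product a_f ⊗ b_f. Then rank_k(A ⊙ B) ≥ min(rank_k(A) + rank_k(B) − 1, F), where rank_k(M) (the Kruskal rank) is the largest r such that every set of r columns of M is linearly independent, assuming rank_k(A) ≥ 1 and rank_k(B) ≥ 1. -/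
/-- Every set of `r` columns of `M` is linearly independent
(i.e. the Kruskal rank of `M` is at least `r`). -/
def KIndep {ι : Type*} {F : ℕ} (M : Matrix ι (Fin F) ℝ) (r : ℕ) : Prop :=
  ∀ s : Finset (Fin F), s.card = r →
    LinearIndependent ℝ (fun f : s => (fun i : ι => M i f))

set_option maxHeartbeats 1000000 in
/-- Any `≤ r` columns of a matrix whose every `r` columns are independent are independent. -/
lemma kindep_subset {ι : Type*} {F : ℕ} (M : Matrix ι (Fin F) ℝ) {r : ℕ}
    (h : ∀ s : Finset (Fin F), s.card = r →
      LinearIndependent ℝ (fun f : s => (fun i : ι => M i f)))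
    (hrF : r ≤ F) (s : Finset (Fin F)) (hs : s.card ≤ r) :
    LinearIndependent ℝ (fun f : s => (fun i : ι => M i f)) := by
  obtain ⟨t, hst, htu, hcard⟩ :=
    Finset.exists_subsuperset_card_eq (Finset.subset_univ s) hs (by simpa using hrF)
  have ht := h t hcard
  refine ht.comp (fun x : {f // f ∈ s} => (⟨x.1, hst x.2⟩ : {f // f ∈ t})) ?_
  intro x y hxy
  simp only [Subtype.mk.injEq] at hxy
  exact Subtype.ext hxy

/-- A single linear functional can be chosen nonzero on finitely many nonzero vectors. -/
lemma exists_dual_ne_zero {V : Type*} [AddCommGroup V] [Module ℝ V]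
    {ι : Type*} [DecidableEq ι] (s : Finset ι) (v : ι → V) (hv : ∀ i ∈ s, v i ≠ 0) :
    ∃ φ : V →ₗ[ℝ] ℝ, ∀ i ∈ s, φ (v i) ≠ 0 := by
  classical
  induction s using Finset.induction_on with
  | empty => exact ⟨0, by simp⟩
  | @insert a s ha ih =>
    obtain ⟨φ, hφ⟩ := ih (fun i hi => hv i (Finset.mem_insert_of_mem hi))
    have hva : v a ≠ 0 := hv a (Finset.mem_insert_self a s)
    obtain ⟨ψ, hψ⟩ : ∃ ψ : V →ₗ[ℝ] ℝ, ψ (v a) ≠ 0 := by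
      by_contra hcon
      push_neg at hcon
      exact hva ((Module.forall_dual_apply_eq_zero_iff ℝ (v a)).mp hcon)
    obtain ⟨c, hc⟩ := Infinite.exists_notMem_finset
      ((insert a s).image (fun i => -(φ (v i)) / ψ (v i)))
    refine ⟨φ + c • ψ, fun i hi => ?_⟩
    intro hzero
    simp only [LinearMap.add_apply, LinearMap.smul_apply, smul_eq_mul] at hzero
    by_cases hψi : ψ (v i) = 0
    · rw [hψi, mul_zero, add_zero] at hzero
      rcases Finset.mem_insert.mp hi with rfl | hi'
      · exact hψ hψi
      · exact hφ i hi' hzero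
    · apply hc
      apply Finset.mem_image.mpr ⟨i, hi, ?_⟩
      field_simp
      linarith [hzero]

set_option maxHeartbeats 1000000 in
/-- Core of Kruskal's lemma: no nontrivial dependence with support of size
`≤ rA + rB - 1` among the Khatri–Rao columns. -/
lemma key_khatri_rao {I J F : ℕ}
    (A : Matrix (Fin I) (Fin F) ℝ) (B : Matrix (Fin J) (Fin F) ℝ)
    (rA rB : ℕ) (hrA1 : 1 ≤ rA) (hrB1 : 1 ≤ rB)
    (hrAF : rA ≤ F) (hrBF : rB ≤ F)
    (hA : ∀ s : Finset (Fin F), s.card = rA →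
      LinearIndependent ℝ (fun f : s => (fun i : Fin I => A i f)))
    (hB : ∀ s : Finset (Fin F), s.card = rB →
      LinearIndependent ℝ (fun f : s => (fun j : Fin J => B j f)))
    (T : Finset (Fin F)) (hTne : T.Nonempty) (hTcard : T.card ≤ rA + rB - 1)
    (c : Fin F → ℝ) (hc : ∀ f ∈ T, c f ≠ 0)
    (heq : ∀ i j, ∑ f ∈ T, c f * A i f * B j f = 0) : False := by
  classical
  have ht1 : 1 ≤ T.card := hTne.card_pos
  set s₀ := min (rB - 1) (T.card - 1) with hs₀def
  have hs₀le : s₀ ≤ T.card := by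
    have := min_le_right (rB - 1) (T.card - 1); omega
  obtain ⟨S₀, hS₀T, hS₀card⟩ := Finset.exists_subset_card_eq hs₀le
  set bcol : Fin F → (Fin J → ℝ) := fun f => fun j => B j f with hbcol
  set W : Submodule ℝ (Fin J → ℝ) := Submodule.span ℝ (bcol '' ↑S₀) with hW
  have hnotmem : ∀ f ∈ T \ S₀, bcol f ∉ W := by
    intro f hf hmem
    have hfS₀ : f ∉ S₀ := (Finset.mem_sdiff.mp hf).2
    have hcard : (insert f S₀).card ≤ rB := by
      rw [Finset.card_insert_of_notMem hfS₀, hS₀card]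
      have := min_le_left (rB - 1) (T.card - 1); omega
    have hind := kindep_subset B hB hrBF (insert f S₀) hcard
    have hkey := hind.notMem_span_image
      (s := {g : {x // x ∈ insert f S₀} | (g : Fin F) ∈ S₀})
      (x := ⟨f, Finset.mem_insert_self f S₀⟩) (by simpa using hfS₀)
    apply hkey
    have himg : ((fun g : {x // x ∈ insert f S₀} => (fun j : Fin J => B j (g : Fin F))) ''
        {g : {x // x ∈ insert f S₀} | (g : Fin F) ∈ S₀}) = bcol '' ↑S₀ := by
      ext x
      constructor
      · rintro ⟨g, hg, rfl⟩; exact ⟨↑g, hg, rfl⟩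
      · rintro ⟨y, hy, rfl⟩; exact ⟨⟨y, Finset.mem_insert_of_mem hy⟩, hy, rfl⟩
    rw [himg]
    exact hmem
  obtain ⟨ψ, hψ⟩ := exists_dual_ne_zero (T \ S₀) (fun f => W.mkQ (bcol f))
    (fun f hf => by
      simp only [ne_eq, Submodule.mkQ_apply, Submodule.Quotient.mk_eq_zero]
      exact hnotmem f hf)
  set φ : (Fin J → ℝ) →ₗ[ℝ] ℝ := ψ.comp W.mkQ with hφdef
  have hφ0 : ∀ g ∈ S₀, φ (bcol g) = 0 := by
    intro g hg
    have hgW : bcol g ∈ W := Submodule.subset_span ⟨g, hg, rfl⟩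
    have : W.mkQ (bcol g) = 0 := (Submodule.Quotient.mk_eq_zero W).mpr hgW
    simp [hφdef, LinearMap.comp_apply, this]
  have hφne : ∀ f ∈ T \ S₀, φ (bcol f) ≠ 0 := fun f hf => by
    simpa [hφdef] using hψ f hf
  have hrow : ∀ i, ∑ f ∈ T, (c f * φ (bcol f)) * A i f = 0 := by
    intro i
    have hz : (∑ f ∈ T, (c f * A i f) • bcol f) = 0 := by
      funext j
      have h0 := heq i j
      simp only [Finset.sum_apply, Pi.smul_apply, smul_eq_mul, Pi.zero_apply, hbcol]
      calc ∑ f ∈ T, (c f * A i f) * B j f = ∑ f ∈ T, c f * A i f * B j f := by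
            apply Finset.sum_congr rfl; intro f _; ring
        _ = 0 := h0
    calc ∑ f ∈ T, (c f * φ (bcol f)) * A i f
        = ∑ f ∈ T, φ ((c f * A i f) • bcol f) := by
          apply Finset.sum_congr rfl; intro f _
          rw [map_smul, smul_eq_mul]; ring
      _ = φ (∑ f ∈ T, (c f * A i f) • bcol f) := (map_sum φ _ T).symm
      _ = 0 := by rw [hz, map_zero]
  have hsum' : ∀ i, ∑ f ∈ T \ S₀, (c f * φ (bcol f)) * A i f = 0 := by
    intro i
    have hsplit := Finset.sum_sdiff (f := fun f => (c f * φ (bcol f)) * A i f) hS₀T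
    have hz0 : ∑ f ∈ S₀, (c f * φ (bcol f)) * A i f = 0 :=
      Finset.sum_eq_zero (fun g hg => by rw [hφ0 g hg]; ring)
    have hr := hrow i
    linarith
  have hT'card : (T \ S₀).card ≤ rA := by
    rw [Finset.card_sdiff_of_subset hS₀T, hS₀card]
    rcases min_cases (rB - 1) (T.card - 1) with ⟨he, _⟩ | ⟨he, _⟩ <;> omega
  have hT'ne : (T \ S₀).Nonempty := by
    rw [← Finset.card_pos, Finset.card_sdiff_of_subset hS₀T, hS₀card]
    have := min_le_right (rB - 1) (T.card - 1); omega
  obtain ⟨f₀, hf₀⟩ := hT'ne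
  have hind := kindep_subset A hA hrAF (T \ S₀) hT'card
  have hdep : (∑ f : {x // x ∈ T \ S₀}, (c ↑f * φ (bcol ↑f)) • (fun i : Fin I => A i ↑f)) = 0 := by
    funext i
    simp only [Finset.sum_apply, Pi.smul_apply, smul_eq_mul, Pi.zero_apply]
    rw [Finset.sum_coe_sort (T \ S₀) (fun f => (c f * φ (bcol f)) * A i f)]
    exact hsum' i
  have hall := (Fintype.linearIndependent_iff.mp hind)
    (fun f : {x // x ∈ T \ S₀} => c ↑f * φ (bcol ↑f)) hdep ⟨f₀, hf₀⟩
  exact (mul_ne_zero (hc f₀ (Finset.mem_sdiff.mp hf₀).1) (hφne f₀ hf₀)) hall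

set_option maxHeartbeats 1000000 in
/-- Kruskal rank of the Khatri–Rao (columnwise Kronecker) product:
if every rA columns of A and every rB columns of B are linearly independent
(rA, rB ≥ 1), then every min(rA + rB − 1, F) columns of A ⊙ B are linearly
independent, i.e. rank_k(A ⊙ B) ≥ min(rank_k(A) + rank_k(B) − 1, F). -/
theorem stmt9
    {I J F : ℕ}
    (A : Matrix (Fin I) (Fin F) ℝ) (B : Matrix (Fin J) (Fin F) ℝ)
    (rA rB : ℕ) (hrA1 : 1 ≤ rA) (hrB1 : 1 ≤ rB)
    (hrAF : rA ≤ F) (hrBF : rB ≤ F)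
    (hA : KIndep A rA) (hB : KIndep B rB) :
    KIndep (Matrix.of fun (ij : Fin I × Fin J) (f : Fin F) =>
        A ij.1 f * B ij.2 f : Matrix (Fin I × Fin J) (Fin F) ℝ)
      (min (rA + rB - 1) F) := by
  classical
  intro s hscard
  by_contra hnotind
  obtain ⟨g, hgsum, i₀, hgi₀⟩ := Fintype.not_linearIndependent_iff.mp hnotind
  set c : Fin F → ℝ := fun f => if h : f ∈ s then g ⟨f, h⟩ else 0 with hcdef
  set T : Finset (Fin F) := s.filter (fun f => c f ≠ 0) with hTdef
  have hTsub : T ⊆ s := Finset.filter_subset _ _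
  have hTne : T.Nonempty := by
    refine ⟨↑i₀, Finset.mem_filter.mpr ⟨i₀.2, ?_⟩⟩
    have : c ↑i₀ = g i₀ := by
      rw [hcdef]; simp only [i₀.2, dif_pos]
    rw [this]; exact hgi₀
  have hTcard : T.card ≤ rA + rB - 1 := by
    have h1 : T.card ≤ s.card := Finset.card_le_card hTsub
    have h2 : s.card = min (rA + rB - 1) F := hscard
    have := min_le_left (rA + rB - 1) F
    omega
  have hc : ∀ f ∈ T, c f ≠ 0 := fun f hf => (Finset.mem_filter.mp hf).2
  refine key_khatri_rao A B rA rB hrA1 hrB1 hrAF hrBF hA hB T hTne hTcard c hc ?_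
  intro i j
  have hsum := congrFun hgsum (i, j)
  simp only [Finset.sum_apply, Pi.smul_apply, smul_eq_mul, Pi.zero_apply, Matrix.of_apply] at hsum
  have hstep : ∑ f ∈ s, c f * A i f * B j f = 0 := by
    rw [← Finset.sum_coe_sort s (fun f => c f * A i f * B j f)]
    rw [← hsum]
    apply Finset.sum_congr rfl
    intro f _
    have : c ↑f = g f := by
      rw [hcdef]; simp only [f.2, dif_pos]
    rw [this]; ring
  rw [← hstep]
  rw [Finset.sum_filter_of_ne]
  intro f _ hne
  intro hc0
  apply hne
  rw [hc0]; ring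
end

section
/- Gaussian PMI bound: fix σ² > 0, σ₀² > 0, and a maximal sample count N_max. For nonnegative integers Nᵢ, N₋ᵢ with Nᵢ + N₋ᵢ ≤ N_max, define PMI(Nᵢ, N₋ᵢ) = √(1/σ₀² + Nᵢ/σ²)·√(1/σ₀² + N₋ᵢ/σ²) / (√(1/σ₀²)·√(1/σ₀² + (Nᵢ+N₋ᵢ)/σ²)). Then (1 + N_max·σ₀²/σ²)^{−1/2} ≤ PMI(Nᵢ, N₋ᵢ) ≤ 1 + N_max·σ₀²/σ². -/
/-! With prior precision `a = 1/σ₀²` and data precisions `x = Nᵢ/σ²`, `y = N₋ᵢ/σ²`, the PMI is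
`√r` for `r = (a + x)(a + y) / (a (a + x + y))`. Since `r - 1 = x y / (a (a + x + y)) ≥ 0` and
`(a + x)(a + y) ≤ (a + x + y)²`, we get `1 ≤ r ≤ 1 + (x + y)/a ≤ 1 + N_max σ₀²/σ²`; hence
`(1 + N_max σ₀²/σ²)^{-1/2} ≤ 1 ≤ √r ≤ r ≤ 1 + N_max σ₀²/σ²`. -/

namespace GaussianPMI

/-- The square of the PMI, for prior precision `a` and data precisions `x`, `y`. -/
noncomputable def precisionRatio (a x y : ℝ) : ℝ := (a + x) * (a + y) / (a * (a + (x + y)))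

variable {a x y : ℝ}

lemma sqrt_precisionRatio (ha : 0 ≤ a) (hx : 0 ≤ x) (hy : 0 ≤ y) :
    √(precisionRatio a x y) = √(a + x) * √(a + y) / (√a * √(a + (x + y))) := by
  rw [precisionRatio, Real.sqrt_div' _ (by positivity), Real.sqrt_mul (by positivity),
    Real.sqrt_mul ha]

lemma one_le_precisionRatio (ha : 0 < a) (hx : 0 ≤ x) (hy : 0 ≤ y) :
    1 ≤ precisionRatio a x y := by
  rw [precisionRatio, one_le_div (by positivity)]
  nlinarith [mul_nonneg hx hy]

lemma precisionRatio_le (ha : 0 < a) (hx : 0 ≤ x) (hy : 0 ≤ y) :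
    precisionRatio a x y ≤ 1 + (x + y) / a := by
  have key : (a + x) * (a + y) ≤ (a + (x + y)) ^ 2 := by nlinarith [mul_nonneg hx hy]
  rw [precisionRatio, one_add_div ha.ne', div_le_div_iff₀ (by positivity) ha]
  nlinarith [mul_le_mul_of_nonneg_left key ha.le]

end GaussianPMI

/-- Gaussian PMI bound: for sample counts Nᵢ + N₋ᵢ ≤ N_max,
(1 + N_max σ₀²/σ²)^{−1/2} ≤ PMI(Nᵢ, N₋ᵢ) ≤ 1 + N_max σ₀²/σ². -/
theorem stmt14
    (σ σ₀ : ℝ) (hσ : 0 < σ) (hσ₀ : 0 < σ₀)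
    (Ni Nmi Nmax : ℕ) (hN : Ni + Nmi ≤ Nmax)
    (PMI : ℝ)
    (hPMI : PMI = Real.sqrt (1 / σ₀ ^ 2 + (Ni : ℝ) / σ ^ 2)
        * Real.sqrt (1 / σ₀ ^ 2 + (Nmi : ℝ) / σ ^ 2)
        / (Real.sqrt (1 / σ₀ ^ 2)
            * Real.sqrt (1 / σ₀ ^ 2 + ((Ni : ℝ) + (Nmi : ℝ)) / σ ^ 2))) :
    (1 + (Nmax : ℝ) * σ₀ ^ 2 / σ ^ 2) ^ (-(1 : ℝ) / 2) ≤ PMI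
    ∧ PMI ≤ 1 + (Nmax : ℝ) * σ₀ ^ 2 / σ ^ 2 := by
  set r := GaussianPMI.precisionRatio (1 / σ₀ ^ 2) (Ni / σ ^ 2) (Nmi / σ ^ 2)
  have hPMI_eq : PMI = √r := by
    rw [hPMI, add_div,
      GaussianPMI.sqrt_precisionRatio (by positivity) (by positivity) (by positivity)]
  have hr_ge : 1 ≤ r :=
    GaussianPMI.one_le_precisionRatio (by positivity) (by positivity) (by positivity)
  have hr_le : r ≤ 1 + (Nmax : ℝ) * σ₀ ^ 2 / σ ^ 2 := by
    refine
      (GaussianPMI.precisionRatio_le (by positivity) (by positivity) (by positivity)).trans ?_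
    have hN' : (Ni : ℝ) + Nmi ≤ Nmax := by exact_mod_cast hN
    rw [← add_div, div_div_eq_mul_div, div_mul_eq_mul_div, div_one]
    gcongr
  rw [hPMI_eq]
  constructor
  · calc (1 + (Nmax : ℝ) * σ₀ ^ 2 / σ ^ 2) ^ (-(1 : ℝ) / 2) ≤ 1 :=
          Real.rpow_le_one_of_one_le_of_nonpos (by linarith) (by norm_num)
      _ ≤ √r := Real.one_le_sqrt.mpr hr_ge
  · exact (Real.sqrt_le_self_iff.mpr (Or.inr hr_ge)).trans hr_le
end

section
/- Beta-Bernoulli sensitivity (injectivity of the h-function): for natural numbers define h_{α₋,β₋}(A,B) = A!·B!·(A+B+α₋+β₋+1)! / ((A+α₋)!·(B+β₋)!·(A+B+1)!). If (A,B) and (A',B') are pairs of natural numbers such that h_{α₋',β₋'}(A,B) = h_{α₋',β₋'}(A',B') for all four parameter pairs (α₋',β₋') ∈ {(α₋,β₋),(α₋+1,β₋),(α₋,β₋+1),(α₋+1,β₋+1)} for some fixed natural numbers α₋,β₋, then (A,B) = (A',B'). -/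
open Nat

/-- The Beta–Bernoulli h-function:
h_{α₋,β₋}(A,B) = A!·B!·(A+B+α₋+β₋+1)! / ((A+α₋)!·(B+β₋)!·(A+B+1)!). -/
noncomputable def hBB (αm βm A B : ℕ) : ℚ :=
  ((A ! : ℚ) * (B ! : ℚ) * ((A + B + αm + βm + 1)! : ℚ))
    / (((A + αm)! : ℚ) * ((B + βm)! : ℚ) * ((A + B + 1)! : ℚ))

/-! Raising β₋ by one multiplies `hBB` by (A+B+α₋+β₋+2)/(B+β₋+1), and by the symmetry
`hBB α₋ β₋ A B = hBB β₋ α₋ B A` raising α₋ multiplies it by (A+B+α₋+β₋+2)/(A+α₋+1).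
Comparing the value at (α₋+1, β₋+1) with its two lower neighbours thus pins down t/a and t/b,
where a = A+α₋+1, b = B+β₋+1 and t = a+b+1. Since (a+b)/t = 1 - 1/t, this determines t,
and then a and b. -/

lemma hBB_pos (αm βm A B : ℕ) : 0 < hBB αm βm A B := by
  unfold hBB
  positivity

lemma hBB_comm (αm βm A B : ℕ) : hBB αm βm A B = hBB βm αm B A := by
  unfold hBB
  rw [show B + A + βm + αm = A + B + αm + βm by ring, add_comm B A]
  ring

lemma hBB_succ_right_mul (αm βm A B : ℕ) :
    hBB αm (βm + 1) A B * ((B : ℚ) + βm + 1)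
      = hBB αm βm A B * ((A : ℚ) + B + αm + βm + 2) := by
  unfold hBB
  rw [← add_assoc, ← add_assoc, Nat.factorial_succ (B + βm),
    Nat.factorial_succ (A + B + αm + βm + 1)]
  push_cast
  field_simp
  ring

lemma cross_mul_eq_of_hBB_succ_right {αm βm A B A' B' : ℕ}
    (h : hBB αm βm A B = hBB αm βm A' B')
    (h_succ : hBB αm (βm + 1) A B = hBB αm (βm + 1) A' B') :
    ((A : ℚ) + B + αm + βm + 2) * ((B' : ℚ) + βm + 1)
      = ((A' : ℚ) + B' + αm + βm + 2) * ((B : ℚ) + βm + 1) := by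
  have hr := hBB_succ_right_mul αm βm A B
  have hr' := hBB_succ_right_mul αm βm A' B'
  rw [h, h_succ] at hr
  refine mul_left_cancel₀ (hBB_pos αm βm A' B').ne' ?_
  linear_combination ((B : ℚ) + βm + 1) * hr' - ((B' : ℚ) + βm + 1) * hr

lemma cross_mul_eq_of_hBB_succ_left {αm βm A B A' B' : ℕ}
    (h : hBB αm βm A B = hBB αm βm A' B')
    (h_succ : hBB (αm + 1) βm A B = hBB (αm + 1) βm A' B') :
    ((A : ℚ) + B + αm + βm + 2) * ((A' : ℚ) + αm + 1)
      = ((A' : ℚ) + B' + αm + βm + 2) * ((A : ℚ) + αm + 1) := by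
  rw [hBB_comm, hBB_comm αm] at h
  rw [hBB_comm, hBB_comm (αm + 1)] at h_succ
  linear_combination cross_mul_eq_of_hBB_succ_right h h_succ

lemma eq_and_eq_of_add_add_one_mul_eq {K : Type*} [Field K] {a b a' b' : K}
    (hs : a + b + 1 ≠ 0) (ha : (a + b + 1) * a' = (a' + b' + 1) * a)
    (hb : (a + b + 1) * b' = (a' + b' + 1) * b) : a = a' ∧ b = b' := by
  -- adding the hypotheses gives t (t' - 1) = t' (t - 1) for t = a + b + 1
  have hs' : a + b + 1 = a' + b' + 1 := by linear_combination -(ha + hb)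
  rw [← hs'] at ha hb
  exact ⟨(mul_left_cancel₀ hs ha).symm, (mul_left_cancel₀ hs hb).symm⟩

theorem stmt15_general
    (αm βm A B A' B' : ℕ)
    (h2 : hBB (αm + 1) βm A B = hBB (αm + 1) βm A' B')
    (h3 : hBB αm (βm + 1) A B = hBB αm (βm + 1) A' B')
    (h4 : hBB (αm + 1) (βm + 1) A B = hBB (αm + 1) (βm + 1) A' B') :
    A = A' ∧ B = B' := by
  have hb := cross_mul_eq_of_hBB_succ_right h2 h4
  have ha := cross_mul_eq_of_hBB_succ_left h3 h4
  push_cast at ha hb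
  obtain ⟨hA, hB⟩ := eq_and_eq_of_add_add_one_mul_eq (a := (A : ℚ) + αm + 1)
    (b := (B : ℚ) + βm + 1) (a' := (A' : ℚ) + αm + 1) (b' := (B' : ℚ) + βm + 1)
    (by positivity) (by linear_combination ha) (by linear_combination hb)
  exact ⟨by simpa using hA, by simpa using hB⟩

/-- Beta–Bernoulli sensitivity (injectivity of the h-function): if
h agrees on (A,B) and (A',B') for the four parameter pairs
(α₋,β₋), (α₋+1,β₋), (α₋,β₋+1), (α₋+1,β₋+1), then (A,B) = (A',B'). -/
theorem stmt15
    (αm βm A B A' B' : ℕ)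
    (h1 : hBB αm βm A B = hBB αm βm A' B')
    (h2 : hBB (αm + 1) βm A B = hBB (αm + 1) βm A' B')
    (h3 : hBB αm (βm + 1) A B = hBB αm (βm + 1) A' B')
    (h4 : hBB (αm + 1) (βm + 1) A B = hBB (αm + 1) (βm + 1) A' B') :
    A = A' ∧ B = B' :=
  stmt15_general αm βm A B A' B' h2 h3 h4
end
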